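/- The stability function of the 2-stage DIRK with b = (1/2,1/2), a11 = a22 = γ, a21 = 1−2γ applied to y' = λy is R(z) = (1 + (1−2γ)z + (γ²−2γ+1/2)z²)/(1−γz)², and |R(z)| ≤ 1 for all real z ≤ 0 if and only if γ ≥ 1/4. -/
import Mathlib


open Matrix

/-- Stability function of the 2-stage DIRK with `b = (1/2,1/2)`,
`a11 = a22 = γ`, `a21 = 1-2γ`: it equals
`(1 + (1-2γ)z + (γ²-2γ+1/2)z²)/(1-γz)²`, and `|R(z)| ≤ 1` for all real
`z ≤ 0` if and only if `γ ≥ 1/4`. -/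
theorem dirk22_stability_function (γ : ℝ) :
    let A : Matrix (Fin 2) (Fin 2) ℝ := !![γ, 0; 1 - 2 * γ, γ]
    let b : Fin 2 → ℝ := ![1 / 2, 1 / 2]
    let R : ℝ → ℝ := fun z => 1 + z * (b ⬝ᵥ (1 - z • A)⁻¹.mulVec (fun _ => 1))
    let Rrat : ℝ → ℝ := fun z =>
      (1 + (1 - 2 * γ) * z + (γ ^ 2 - 2 * γ + 1 / 2) * z ^ 2) / (1 - γ * z) ^ 2
    (∀ z : ℝ, 1 - γ * z ≠ 0 → R z = Rrat z) ∧
    ((∀ z : ℝ, z ≤ 0 → |Rrat z| ≤ 1) ↔ 1 / 4 ≤ γ) := by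
  intro A b R Rrat
  constructor
  · intro z hz
    have h1 : 1 - z * γ ≠ 0 := by rw [mul_comm]; exact hz
    have h2 : (2 : ℝ) - z * γ * 2 ≠ 0 := by
      intro h; apply h1; linarith
    have h3 : 1 - z * γ * 2 + z ^ 2 * γ ^ 2 ≠ 0 := by
      intro h; apply h1
      have : (1 - z * γ) ^ 2 = 0 := by ring_nf; linarith [h]
      exact pow_eq_zero_iff (n := 2) (by norm_num) |>.mp this
    have hM : (1 : Matrix (Fin 2) (Fin 2) ℝ) - z • A =
        !![1 - z * γ, 0; -(z * (1 - 2 * γ)), 1 - z * γ] := by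
      ext i j
      fin_cases i <;> fin_cases j <;>
        simp [A, Matrix.one_apply] <;> ring
    simp only [R, Rrat]
    rw [hM, Matrix.inv_def, Matrix.adjugate_fin_two, Matrix.det_fin_two]
    simp [Matrix.mulVec, dotProduct, Fin.sum_univ_two, b, Ring.inverse_eq_inv']
    field_simp
    ring
  · constructor
    · intro h
      by_contra hγ
      push_neg at hγ
      have hcpos : 0 < 1 / 2 - 2 * γ := by linarith
      have hc0 : (1 / 2 - 2 * γ : ℝ) ≠ 0 := ne_of_gt hcpos
      obtain ⟨z, hzneg, hcz, hden⟩ :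
          ∃ z : ℝ, z < 0 ∧ 1 + (1 / 2 - 2 * γ) * z < 0 ∧ 1 - γ * z ≠ 0 := by
        by_cases h1 : 1 - γ * (-2 / (1 / 2 - 2 * γ)) ≠ 0
        · refine ⟨-2 / (1 / 2 - 2 * γ), div_neg_of_neg_of_pos (by norm_num) hcpos, ?_, h1⟩
          have : (1 / 2 - 2 * γ) * (-2 / (1 / 2 - 2 * γ)) = -2 := by
            rw [mul_comm, div_mul_cancel₀ _ hc0]
          linarith
        · refine ⟨-3 / (1 / 2 - 2 * γ), div_neg_of_neg_of_pos (by norm_num) hcpos, ?_, ?_⟩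
          · have : (1 / 2 - 2 * γ) * (-3 / (1 / 2 - 2 * γ)) = -3 := by
              rw [mul_comm, div_mul_cancel₀ _ hc0]
            linarith
          · push_neg at h1
            intro h2
            have hγ0 : γ ≠ 0 := by
              intro h0; rw [h0] at h1; norm_num at h1
            have e1 : γ * (-2 / (1 / 2 - 2 * γ)) = 1 := by linarith
            have e2 : γ * (-3 / (1 / 2 - 2 * γ)) = 1 := by linarith
            rw [mul_div_assoc', div_eq_one_iff_eq hc0] at e1 e2
            have : γ = 0 := by linarith [e1, e2]
            exact hγ0 this
      have hd2 : 0 < (1 - γ * z) ^ 2 := by positivity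
      have hz2 : 0 < z * (1 + (1 / 2 - 2 * γ) * z) := mul_pos_of_neg_of_neg hzneg hcz
      have key : 1 < Rrat z := by
        simp only [Rrat]
        rw [lt_div_iff₀ hd2]
        nlinarith [hz2]
      have := abs_le.mp (h z hzneg.le)
      linarith [this.2]
    · intro hγ z hz
      by_cases hden : 1 - γ * z = 0
      · simp [Rrat, hden]
      · have hd2 : 0 < (1 - γ * z) ^ 2 := by positivity
        rw [abs_le]
        have hz' : 0 ≤ -z := by linarith
        constructor
        · rw [le_div_iff₀ hd2]
          nlinarith [sq_nonneg ((γ - 1 / 2) * z),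
            mul_nonneg (by linarith : (0 : ℝ) ≤ 4 * γ - 1) hz']
        · rw [div_le_one hd2]
          have h1 : 0 ≤ 1 + (1 / 2 - 2 * γ) * z := by
            nlinarith [mul_nonneg (by linarith : (0 : ℝ) ≤ 2 * γ - 1 / 2) hz']
          nlinarith [mul_nonneg hz' h1]
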